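/- For all natural numbers h ≤ k: if A is a formula of L0 with lev(A) = h and the sequent Γ, A' has a cut-free derivation in M^Ω_k, then the sequent Γ, A also has a cut-free derivation in M^Ω_k. -/

import Mathlib

namespace OneVarMu

/-- Operator forms of the language `L_Ω` (one fixed variable `X`, written `var`).
`nut` is the auxiliary fixed-point connective `ν̃`; `L0` operator forms are the
`nut`-free ones. -/
inductive Form : Type
  | atom  : ℕ → Form          -- p_i
  | natom : ℕ → Form          -- p̄_i
  | var   : Form              -- X
  | and   : Form → Form → Form
  | or    : Form → Form → Form
  | box   : Form → Form
  | dia   : Form → Form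
  | mu    : Form → Form       -- μX.A
  | nu    : Form → Form       -- νX.A
  | nut   : Form → Form       -- ν̃X.A
  deriving DecidableEq

namespace Form

/-- Negation `¬A` (on `ν̃` we extend the `L0` definition as for `ν`). -/
def compl : Form → Form
  | atom i  => natom i
  | natom i => atom i
  | var     => var
  | and A B => or (compl A) (compl B)
  | or A B  => and (compl A) (compl B)
  | box A   => dia (compl A)
  | dia A   => box (compl A)
  | mu A    => nu (compl A)
  | nu A    => mu (compl A)
  | nut A   => mu (compl A)

/-- `subst A B` is `A(B)`: substitute `B` for every free occurrence of `X` in `A`. -/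
def subst : Form → Form → Form
  | atom i, _  => atom i
  | natom i, _ => natom i
  | var, B     => B
  | and A1 A2, B => and (subst A1 B) (subst A2 B)
  | or A1 A2, B  => or (subst A1 B) (subst A2 B)
  | box A, B   => box (subst A B)
  | dia A, B   => dia (subst A B)
  | mu A, _    => mu A
  | nu A, _    => nu A
  | nut A, _   => nut A

/-- The level of an operator form: maximal nesting of fixed-point operators. -/
def lev : Form → ℕ
  | atom _  => 0
  | natom _ => 0
  | var     => 0
  | and A B => max (lev A) (lev B)
  | or A B  => max (lev A) (lev B)
  | box A   => lev A
  | dia A   => lev A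
  | mu A    => lev A + 1
  | nu A    => lev A + 1
  | nut A   => lev A + 1

/-- `A'`: replace every occurrence of `νX` by `ν̃X`. -/
def prime : Form → Form
  | atom i  => atom i
  | natom i => natom i
  | var     => var
  | and A B => and (prime A) (prime B)
  | or A B  => or (prime A) (prime B)
  | box A   => box (prime A)
  | dia A   => dia (prime A)
  | mu A    => mu (prime A)
  | nu A    => nut (prime A)
  | nut A   => nut (prime A)

/-- `A` is an operator form of `L0`, i.e. contains no `ν̃`. -/
def IsL0 : Form → Prop
  | and A B => IsL0 A ∧ IsL0 B
  | or A B  => IsL0 A ∧ IsL0 B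
  | box A   => IsL0 A
  | dia A   => IsL0 A
  | mu A    => IsL0 A
  | nu A    => IsL0 A
  | nut _   => False
  | _       => True

/-- `A` has no free occurrence of the variable `X`, i.e. `A` is a formula. -/
def ClosedF : Form → Prop
  | var     => False
  | and A B => ClosedF A ∧ ClosedF B
  | or A B  => ClosedF A ∧ ClosedF B
  | box A   => ClosedF A
  | dia A   => ClosedF A
  | _       => True

/-- `⊤ := p ∨ p̄` for a fixed atomic proposition. -/
def top : Form := or (atom 0) (natom 0)

/-- Finite iterations `A^i(⊤)`. -/
def iter (A : Form) : ℕ → Form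
  | 0     => top
  | n + 1 => subst A (iter A n)

/-- `OccursIn A B`: the operator form `A` occurs (as a subterm) in `B`. -/
def OccursIn (A : Form) : Form → Prop
  | atom i  => A = atom i
  | natom i => A = natom i
  | var     => A = var
  | and C D => A = and C D ∨ OccursIn A C ∨ OccursIn A D
  | or C D  => A = or C D ∨ OccursIn A C ∨ OccursIn A D
  | box C   => A = box C ∨ OccursIn A C
  | dia C   => A = dia C ∨ OccursIn A C
  | mu C    => A = mu C ∨ OccursIn A C
  | nu C    => A = nu C ∨ OccursIn A C
  | nut C   => A = nut C ∨ OccursIn A C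

/-- `replace t r A`: simultaneously replace every occurrence of `t` in `A` by `r`. -/
def replace (t r : Form) : Form → Form
  | and A B => if and A B = t then r else and (replace t r A) (replace t r B)
  | or A B  => if or A B = t then r else or (replace t r A) (replace t r B)
  | box A   => if box A = t then r else box (replace t r A)
  | dia A   => if dia A = t then r else dia (replace t r A)
  | mu A    => if mu A = t then r else mu (replace t r A)
  | nu A    => if nu A = t then r else nu (replace t r A)
  | nut A   => if nut A = t then r else nut (replace t r A)
  | A       => if A = t then r else A

end Form

/-- Sequents are finite sets of formulae. -/
abbrev Sequent := Finset Form

/-- Every member is a formula (no free `X`): a sequent of `L_Ω`. -/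
def ClosedSeq (Γ : Sequent) : Prop := ∀ C ∈ Γ, C.ClosedF

/-- A sequent of `L0`: every member is a `ν̃`-free formula. -/
def L0Seq (Γ : Sequent) : Prop := ∀ C ∈ Γ, C.IsL0 ∧ C.ClosedF

/-- `Γ` is `h`-positive: every `ν̃X.A` occurring in it has level `< h`. -/
def Positive (h : ℕ) (Γ : Sequent) : Prop :=
  ∀ C ∈ Γ, ∀ B : Form, Form.OccursIn (Form.nut B) C → Form.lev (Form.nut B) < h

/-- Every formula of the sequent has level `≤ k`. -/
def SeqLevLE (k : ℕ) (Γ : Sequent) : Prop := ∀ C ∈ Γ, C.lev ≤ k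

/-- The infinitary cut-free system `K_ω`. -/
inductive KDer : Sequent → Prop
  | ax (Γ : Sequent) (i : ℕ) :
      KDer (insert (Form.atom i) (insert (Form.natom i) Γ))
  | orR (Γ : Sequent) (A B : Form) :
      KDer (insert A (insert B Γ)) → KDer (insert (Form.or A B) Γ)
  | andR (Γ : Sequent) (A B : Form) :
      KDer (insert A Γ) → KDer (insert B Γ) → KDer (insert (Form.and A B) Γ)
  | boxR (Γ S : Sequent) (A : Form) :
      KDer (insert A Γ) → KDer (Γ.image Form.dia ∪ insert (Form.box A) S)
  | clo (Γ : Sequent) (A : Form) :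
      KDer (insert (Form.subst A (Form.mu A)) Γ) → KDer (insert (Form.mu A) Γ)
  | nuR (Γ : Sequent) (A : Form) :
      (∀ i : ℕ, KDer (insert (Form.iter A i) Γ)) → KDer (insert (Form.nu A) Γ)

/-- The finitary system `M` (with induction rule and cut). -/
inductive MDer : Sequent → Prop
  | ax (Γ : Sequent) (i : ℕ) :
      MDer (insert (Form.atom i) (insert (Form.natom i) Γ))
  | axMu (Γ : Sequent) (A : Form) :
      MDer (insert (Form.mu A) (insert (Form.compl (Form.mu A)) Γ))
  | orR (Γ : Sequent) (A B : Form) :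
      MDer (insert A (insert B Γ)) → MDer (insert (Form.or A B) Γ)
  | andR (Γ : Sequent) (A B : Form) :
      MDer (insert A Γ) → MDer (insert B Γ) → MDer (insert (Form.and A B) Γ)
  | boxR (Γ S : Sequent) (A : Form) :
      MDer (insert A Γ) → MDer (Γ.image Form.dia ∪ insert (Form.box A) S)
  | clo (Γ : Sequent) (A : Form) :
      MDer (insert (Form.subst A (Form.mu A)) Γ) → MDer (insert (Form.mu A) Γ)
  | ind (A B : Form) :
      MDer (insert (Form.compl (Form.subst A B)) {B}) →
      MDer (insert (Form.compl (Form.mu A)) {B})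
  | cut (Γ : Sequent) (A : Form) :
      A.IsL0 → A.ClosedF →
      MDer (insert A Γ) → MDer (insert (Form.compl A) Γ) → MDer Γ

/-- The finitary system `M`, with the extra recording that every sequent occurring
in the proof (i.e. the conclusion of every subderivation) has level `≤ k`. -/
inductive MDerB (k : ℕ) : Sequent → Prop
  | ax (Γ : Sequent) (i : ℕ) :
      SeqLevLE k (insert (Form.atom i) (insert (Form.natom i) Γ)) →
      MDerB k (insert (Form.atom i) (insert (Form.natom i) Γ))
  | axMu (Γ : Sequent) (A : Form) :
      SeqLevLE k (insert (Form.mu A) (insert (Form.compl (Form.mu A)) Γ)) →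
      MDerB k (insert (Form.mu A) (insert (Form.compl (Form.mu A)) Γ))
  | orR (Γ : Sequent) (A B : Form) :
      SeqLevLE k (insert (Form.or A B) Γ) →
      MDerB k (insert A (insert B Γ)) → MDerB k (insert (Form.or A B) Γ)
  | andR (Γ : Sequent) (A B : Form) :
      SeqLevLE k (insert (Form.and A B) Γ) →
      MDerB k (insert A Γ) → MDerB k (insert B Γ) → MDerB k (insert (Form.and A B) Γ)
  | boxR (Γ S : Sequent) (A : Form) :
      SeqLevLE k (Γ.image Form.dia ∪ insert (Form.box A) S) →
      MDerB k (insert A Γ) → MDerB k (Γ.image Form.dia ∪ insert (Form.box A) S)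
  | clo (Γ : Sequent) (A : Form) :
      SeqLevLE k (insert (Form.mu A) Γ) →
      MDerB k (insert (Form.subst A (Form.mu A)) Γ) → MDerB k (insert (Form.mu A) Γ)
  | ind (A B : Form) :
      SeqLevLE k (insert (Form.compl (Form.mu A)) {B}) →
      MDerB k (insert (Form.compl (Form.subst A B)) {B}) →
      MDerB k (insert (Form.compl (Form.mu A)) {B})
  | cut (Γ : Sequent) (A : Form) :
      A.IsL0 → A.ClosedF → SeqLevLE k Γ →
      MDerB k (insert A Γ) → MDerB k (insert (Form.compl A) Γ) → MDerB k Γ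

/-- Derivations of the system `M^Ω_k`, relative to a predicate `prev` expressing
cut-free derivability in `M^Ω_{k-1}`.  The boolean index is `true` if instances
of cut are allowed and `false` for cut-free derivations. -/
inductive OmDerAux (prev : Sequent → Prop) (k : ℕ) : Bool → Sequent → Prop
  | ax (c : Bool) (Γ : Sequent) (i : ℕ) :
      OmDerAux prev k c (insert (Form.atom i) (insert (Form.natom i) Γ))
  | orR (c : Bool) (Γ : Sequent) (A B : Form) :
      OmDerAux prev k c (insert A (insert B Γ)) →
      OmDerAux prev k c (insert (Form.or A B) Γ)
  | andR (c : Bool) (Γ : Sequent) (A B : Form) :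
      OmDerAux prev k c (insert A Γ) → OmDerAux prev k c (insert B Γ) →
      OmDerAux prev k c (insert (Form.and A B) Γ)
  | boxR (c : Bool) (Γ S : Sequent) (A : Form) :
      OmDerAux prev k c (insert A Γ) →
      OmDerAux prev k c (Γ.image Form.dia ∪ insert (Form.box A) S)
  | clo (c : Bool) (Γ : Sequent) (A : Form) :
      OmDerAux prev k c (insert (Form.subst A (Form.mu A)) Γ) →
      OmDerAux prev k c (insert (Form.mu A) Γ)
  | nuR (c : Bool) (Γ : Sequent) (A : Form) :
      (∀ i : ℕ, OmDerAux prev k c (insert (Form.iter A i) Γ)) →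
      OmDerAux prev k c (insert (Form.nu A) Γ)
  | cut (Γ : Sequent) (A : Form) :
      A.IsL0 → A.ClosedF → A.lev ≤ k →
      OmDerAux prev k true (insert (Form.prime A) Γ) →
      OmDerAux prev k true (insert (Form.prime (Form.compl A)) Γ) →
      OmDerAux prev k true Γ
  | omega (c : Bool) (Γ : Sequent) (A : Form) (h : ℕ) :
      1 ≤ h → h ≤ k → A.IsL0 →
      Form.lev (Form.prime (Form.compl (Form.mu A))) = h →
      (∀ Δ : Sequent, ClosedSeq Δ → Positive h Δ →
        prev (insert (Form.prime (Form.mu A)) Δ) → OmDerAux prev k c (Δ ∪ Γ)) →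
      OmDerAux prev k c (insert (Form.prime (Form.compl (Form.mu A))) Γ)
  | omegaT (c : Bool) (Γ : Sequent) (A : Form) (h : ℕ) :
      1 ≤ h → h ≤ k → A.IsL0 →
      Form.lev (Form.prime (Form.compl (Form.mu A))) = h →
      OmDerAux prev k c (insert (Form.prime (Form.mu A)) Γ) →
      (∀ Δ : Sequent, ClosedSeq Δ → Positive h Δ →
        prev (insert (Form.prime (Form.mu A)) Δ) → OmDerAux prev k c (Δ ∪ Γ)) →
      OmDerAux prev k c Γ

/-- `OmProv k c Γ`: the sequent `Γ` is derivable in `M^Ω_k`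
(cut-free when `c = false`). -/
def OmProv : ℕ → Bool → Sequent → Prop
  | 0     => OmDerAux (fun _ => False) 0
  | k + 1 => OmDerAux (fun Δ => OmProv k false Δ) (k + 1)

/-!
The proof is an induction on the cut-free derivation of `Γ, A'`, during which any primed formula
may be traded for an unprimed `L0` formula of level `≤ k` (a whole set of them, since a principal
formula of a set sequent may persist into the premises). Every rule commutes with this, except an
`Ω_h` inference whose principal formula `ν̃X.(¬C)'` is traded for `νX.¬C`: that formula is derived
by the `ω`-rule, the `i`-th premise `Γ, (¬C)^i(⊤)` being the `Ω_h` premise at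
`Δ = ((¬C)^i(⊤))'`. The proviso of that premise, a cut-free derivation of
`(μX.C)', ((¬C)^i(⊤))'` in `M^Ω_{k-1}`, is built by induction on `i`: from the case `i` one gets
`C(μX.C)', ((¬C)^(i+1)(⊤))'` by expanding `C` as an identity, closing its fixed points (of level
`< k`) by `Ω` rules, and then applies the closure rule. The `Ω` rules need to lift derivations from
`M^Ω_{k-1}` to `M^Ω_k`, and lifting the `Ω` provisos needs the converse for closed `h`-positive
sequents; the two are proved together by induction on the stage.
-/

namespace Form

@[simp] theorem lev_compl (A : Form) : A.compl.lev = A.lev := by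
  induction A <;> simp [compl, lev, *]

@[simp] theorem lev_prime (A : Form) : A.prime.lev = A.lev := by
  induction A <;> simp [prime, lev, *]

theorem lev_subst_le (A B : Form) : (A.subst B).lev ≤ max A.lev B.lev := by
  induction A <;> simp [subst, lev] <;> omega

theorem lev_prime_compl_mu (A : Form) : (mu A).compl.prime.lev = A.lev + 1 := by
  simp [compl, lev]

theorem lev_iter_le (A : Form) (i : ℕ) : (A.iter i).lev ≤ A.lev := by
  induction i with
  | zero => simp [iter, top, lev]
  | succ i ih => exact (lev_subst_le A _).trans (max_le le_rfl ih)

theorem IsL0.compl {A : Form} (hA : A.IsL0) : A.compl.IsL0 := by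
  induction A <;> simp_all [Form.compl, IsL0]

theorem IsL0.subst {A B : Form} (hA : A.IsL0) (hB : B.IsL0) : (A.subst B).IsL0 := by
  induction A <;> simp_all [Form.subst, IsL0]

theorem IsL0.iter {A : Form} (hA : A.IsL0) (i : ℕ) : (A.iter i).IsL0 := by
  induction i with
  | zero => simp [Form.iter, top, IsL0]
  | succ i ih => exact hA.subst ih

theorem ClosedF.prime {A : Form} (hA : A.ClosedF) : A.prime.ClosedF := by
  induction A <;> simp_all [Form.prime, ClosedF]

theorem closedF_subst (A : Form) {B : Form} (hB : B.ClosedF) : (A.subst B).ClosedF := by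
  induction A <;> simp_all [subst, ClosedF]

theorem closedF_iter (A : Form) (i : ℕ) : (A.iter i).ClosedF := by
  induction i with
  | zero => simp [iter, top, ClosedF]
  | succ i ih => exact closedF_subst A ih

theorem prime_subst (A B : Form) : (A.subst B).prime = A.prime.subst B.prime := by
  induction A <;> simp [subst, prime, *]

theorem compl_compl {A : Form} (hA : A.IsL0) : A.compl.compl = A := by
  induction A <;> simp_all [compl, IsL0]

theorem prime_inj {A B : Form} (hA : A.IsL0) (hB : B.IsL0) (h : A.prime = B.prime) : A = B := by
  induction A generalizing B <;> cases B <;> simp only [prime, IsL0, reduceCtorEq, and.injEq,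
    or.injEq, box.injEq, dia.injEq, mu.injEq, nu.injEq, nut.injEq, atom.injEq, natom.injEq] at * <;>
    grind

theorem lev_le_of_occursIn {B C : Form} (h : OccursIn B C) : B.lev ≤ C.lev := by
  induction C <;> simp only [OccursIn] at h <;> grind [lev]

theorem occursIn_nut_subst {E A B : Form} (h : OccursIn (nut E) (A.subst B)) :
    OccursIn (nut E) A ∨ OccursIn (nut E) B := by
  induction A <;> simp_all [subst, OccursIn] <;> grind

theorem occursIn_nut_iter {E A : Form} {i : ℕ} (h : OccursIn (nut E) (A.iter i)) :
    OccursIn (nut E) A := by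
  induction i with
  | zero => simp [iter, top, OccursIn] at h
  | succ i ih => exact (occursIn_nut_subst h).elim id ih

end Form

def PosF (h : ℕ) (C : Form) : Prop :=
  ∀ E : Form, Form.OccursIn (Form.nut E) C → Form.lev (Form.nut E) < h

namespace PosF

variable {h : ℕ} {A B : Form}

theorem of_lev_lt (hA : A.lev < h) : PosF h A :=
  fun _ hE => (Form.lev_le_of_occursIn hE).trans_lt hA

theorem prime_mu (hA : A.lev < h) : PosF h (Form.mu A).prime := by
  rintro E (hE | hE)
  · cases hE
  · exact (Form.lev_le_of_occursIn hE).trans_lt (by simpa using hA)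

theorem of_or (H : PosF h (Form.or A B)) : PosF h A ∧ PosF h B :=
  ⟨fun E hE => H E (.inr (.inl hE)), fun E hE => H E (.inr (.inr hE))⟩

theorem of_and (H : PosF h (Form.and A B)) : PosF h A ∧ PosF h B :=
  ⟨fun E hE => H E (.inr (.inl hE)), fun E hE => H E (.inr (.inr hE))⟩

theorem of_box (H : PosF h (Form.box A)) : PosF h A := fun E hE => H E (.inr hE)

theorem of_dia (H : PosF h (Form.dia A)) : PosF h A := fun E hE => H E (.inr hE)

theorem of_nu (H : PosF h (Form.nu A)) : PosF h A := fun E hE => H E (.inr hE)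

theorem subst (hA : PosF h A) (hB : PosF h B) : PosF h (A.subst B) :=
  fun E hE => (Form.occursIn_nut_subst hE).elim (hA E) (hB E)

theorem clo (H : PosF h (Form.mu A)) : PosF h (A.subst (Form.mu A)) :=
  subst (fun E hE => H E (.inr hE)) H

theorem iter (hA : PosF h A) (i : ℕ) : PosF h (A.iter i) :=
  fun E hE => hA E (Form.occursIn_nut_iter hE)

end PosF

section Sequents

variable {h h' : ℕ} {C : Form} {Γ Δ : Sequent}

theorem positive_insert : Positive h (insert C Γ) ↔ PosF h C ∧ Positive h Γ :=
  Finset.forall_mem_insert _ _ _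

theorem positive_union : Positive h (Δ ∪ Γ) ↔ Positive h Δ ∧ Positive h Γ :=
  Finset.forall_mem_union

theorem Positive.mono (hh : h ≤ h') (hΓ : Positive h Γ) : Positive h' Γ :=
  fun C hC E hE => (hΓ C hC E hE).trans_le hh

theorem closedSeq_insert : ClosedSeq (insert C Γ) ↔ C.ClosedF ∧ ClosedSeq Γ :=
  Finset.forall_mem_insert _ _ _

theorem closedSeq_union : ClosedSeq (Δ ∪ Γ) ↔ ClosedSeq Δ ∧ ClosedSeq Γ :=
  Finset.forall_mem_union

end Sequents

def prevProv : ℕ → Sequent → Prop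
  | 0 => fun _ => False
  | k + 1 => OmProv k false

theorem omProv_eq (k : ℕ) : OmProv k = OmDerAux (prevProv k) k := by
  cases k <;> rfl

theorem prevProv_succ (k : ℕ) : prevProv (k + 1) = OmDerAux (prevProv k) k false := by
  rw [← omProv_eq]; rfl

namespace OmDerAux

section RulesOfMem

variable {prev : Sequent → Prop} {k : ℕ} {c : Bool} {Θ : Sequent} {A B : Form}

theorem ax_of_mem (c : Bool) {i : ℕ} (ha : Form.atom i ∈ Θ) (hn : Form.natom i ∈ Θ) :
    OmDerAux prev k c Θ := by
  rw [← Finset.insert_eq_of_mem ha, ← Finset.insert_eq_of_mem hn]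
  exact ax c Θ i

theorem orR_of_mem (h : Form.or A B ∈ Θ) (d : OmDerAux prev k c (insert A (insert B Θ))) :
    OmDerAux prev k c Θ := by
  rw [← Finset.insert_eq_of_mem h]
  exact orR c Θ A B d

theorem andR_of_mem (h : Form.and A B ∈ Θ) (dA : OmDerAux prev k c (insert A Θ))
    (dB : OmDerAux prev k c (insert B Θ)) : OmDerAux prev k c Θ := by
  rw [← Finset.insert_eq_of_mem h]
  exact andR c Θ A B dA dB

theorem boxR_of_mem {Γ : Sequent} (h : Form.box A ∈ Θ) (hΓ : Γ.image Form.dia ⊆ Θ)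
    (d : OmDerAux prev k c (insert A Γ)) : OmDerAux prev k c Θ := by
  rw [← Finset.union_eq_right.2 hΓ, ← Finset.insert_eq_of_mem h]
  exact boxR c Γ Θ A d

theorem clo_of_mem (h : Form.mu A ∈ Θ) (d : OmDerAux prev k c (insert (A.subst (Form.mu A)) Θ)) :
    OmDerAux prev k c Θ := by
  rw [← Finset.insert_eq_of_mem h]
  exact clo c Θ A d

theorem nuR_of_mem (h : Form.nu A ∈ Θ) (d : ∀ i, OmDerAux prev k c (insert (A.iter i) Θ)) :
    OmDerAux prev k c Θ := by
  rw [← Finset.insert_eq_of_mem h]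
  exact nuR c Θ A d

theorem omega_of_mem (c : Bool) (A : Form) (h : ℕ) (h1 : 1 ≤ h) (hk : h ≤ k) (hA : A.IsL0)
    (hlev : (Form.mu A).compl.prime.lev = h) (hmem : (Form.mu A).compl.prime ∈ Θ)
    (d : ∀ Δ, ClosedSeq Δ → Positive h Δ → prev (insert (Form.mu A).prime Δ) →
      OmDerAux prev k c (Δ ∪ Θ)) : OmDerAux prev k c Θ := by
  rw [← Finset.insert_eq_of_mem hmem]
  exact omega c Θ A h h1 hk hA hlev d

end RulesOfMem

theorem mono {prev prev' : Sequent → Prop} {n n' : ℕ} (hn : n ≤ n')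
    (hprev : ∀ (A : Form) (Δ : Sequent), A.lev < n → ClosedSeq Δ → Positive n Δ →
      prev' (insert (Form.mu A).prime Δ) → prev (insert (Form.mu A).prime Δ))
    {c : Bool} {Θ : Sequent} (d : OmDerAux prev n c Θ) {Θ' : Sequent} (hΘ : Θ ⊆ Θ') :
    OmDerAux prev' n' c Θ' := by
  induction d generalizing Θ' with
  | ax c Γ i => exact ax_of_mem c (i := i) (hΘ (by simp)) (hΘ (by simp))
  | orR c Γ A B _ ih =>
    exact orR_of_mem (hΘ (Finset.mem_insert_self _ _)) (ih (by grind))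
  | andR c Γ A B _ _ ihA ihB =>
    exact andR_of_mem (hΘ (Finset.mem_insert_self _ _)) (ihA (by grind)) (ihB (by grind))
  | boxR c Γ S A _ ih =>
    exact boxR_of_mem (hΘ (by simp)) (Finset.union_subset_left hΘ) (ih subset_rfl)
  | clo c Γ A _ ih => exact clo_of_mem (hΘ (Finset.mem_insert_self _ _)) (ih (by grind))
  | nuR c Γ A _ ih => exact nuR_of_mem (hΘ (Finset.mem_insert_self _ _)) fun i => ih i (by grind)
  | cut Γ A hA hAc hlev _ _ ih₁ ih₂ =>
    exact cut Θ' A hA hAc (hlev.trans hn) (ih₁ (by grind)) (ih₂ (by grind))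
  | omega c Γ A h h1 hk hA hlev _ ih =>
    have hlevA : A.lev + 1 = h := (Form.lev_prime_compl_mu A).symm.trans hlev
    refine omega_of_mem c A h h1 (hk.trans hn) hA hlev (hΘ (Finset.mem_insert_self _ _))
      fun Δ hcl hpos hprev' => ih Δ hcl hpos ?_ (by grind)
    exact hprev A Δ (by omega) hcl (hpos.mono hk) hprev'
  | omegaT c Γ A h h1 hk hA hlev _ _ ih₁ ih =>
    have hlevA : A.lev + 1 = h := (Form.lev_prime_compl_mu A).symm.trans hlev
    refine omegaT c Θ' A h h1 (hk.trans hn) hA hlev (ih₁ (by grind))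
      fun Δ hcl hpos hprev' => ih Δ hcl hpos ?_ (by grind)
    exact hprev A Δ (by omega) hcl (hpos.mono hk) hprev'

theorem weaken {prev : Sequent → Prop} {k : ℕ} {c : Bool} {Θ Θ' : Sequent}
    (d : OmDerAux prev k c Θ) (hΘ : Θ ⊆ Θ') : OmDerAux prev k c Θ' :=
  d.mono le_rfl (fun _ _ _ _ _ h => h) hΘ

theorem stage_pred {n : ℕ} (hR : ∀ S, prevProv n S → prevProv (n + 1) S)
    {Θ : Sequent} (d : OmDerAux (prevProv (n + 1)) (n + 1) false Θ)
    (hcl : ClosedSeq Θ) (hpos : Positive (n + 1) Θ) : OmDerAux (prevProv n) n false Θ := by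
  suffices ∀ {c Θ}, OmDerAux (prevProv (n + 1)) (n + 1) c Θ → c = false → ClosedSeq Θ →
      Positive (n + 1) Θ → OmDerAux (prevProv n) n false Θ from this d rfl hcl hpos
  intro c Θ d hc hcl hpos
  induction d with
  | ax c Γ i => exact ax false Γ i
  | orR c Γ A B _ ih =>
    simp only [closedSeq_insert, positive_insert] at hcl hpos
    exact orR false Γ A B
      (ih hc (closedSeq_insert.2 ⟨hcl.1.1, closedSeq_insert.2 ⟨hcl.1.2, hcl.2⟩⟩)
        (positive_insert.2 ⟨hpos.1.of_or.1, positive_insert.2 ⟨hpos.1.of_or.2, hpos.2⟩⟩))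
  | andR c Γ A B _ _ ihA ihB =>
    simp only [closedSeq_insert, positive_insert] at hcl hpos
    exact andR false Γ A B
      (ihA hc (closedSeq_insert.2 ⟨hcl.1.1, hcl.2⟩) (positive_insert.2 ⟨hpos.1.of_and.1, hpos.2⟩))
      (ihB hc (closedSeq_insert.2 ⟨hcl.1.2, hcl.2⟩) (positive_insert.2 ⟨hpos.1.of_and.2, hpos.2⟩))
  | boxR c Γ S A _ ih =>
    simp only [closedSeq_union, closedSeq_insert, positive_union, positive_insert] at hcl hpos
    refine boxR false Γ S A (ih hc (closedSeq_insert.2 ⟨hcl.2.1, fun C hC => ?_⟩)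
      (positive_insert.2 ⟨hpos.2.1.of_box, fun C hC => ?_⟩))
    · exact hcl.1 (Form.dia C) (Finset.mem_image_of_mem _ hC)
    · exact PosF.of_dia (hpos.1 (Form.dia C) (Finset.mem_image_of_mem _ hC))
  | clo c Γ A _ ih =>
    simp only [closedSeq_insert, positive_insert] at hcl hpos
    have hclo := Form.closedF_subst A (B := Form.mu A) trivial
    exact clo false Γ A (ih hc (closedSeq_insert.2 ⟨hclo, hcl.2⟩)
      (positive_insert.2 ⟨hpos.1.clo, hpos.2⟩))
  | nuR c Γ A _ ih =>
    simp only [closedSeq_insert, positive_insert] at hcl hpos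
    exact nuR false Γ A fun i => ih i hc (closedSeq_insert.2 ⟨Form.closedF_iter A i, hcl.2⟩)
      (positive_insert.2 ⟨hpos.1.of_nu.iter i, hpos.2⟩)
  | cut => cases hc
  | omega c Γ A h h1 hk hA hlev _ ih =>
    simp only [closedSeq_insert, positive_insert] at hcl hpos
    -- the principal formula is `ν̃X.(¬A)'` itself, so positivity bounds its level
    have hh : h < n + 1 := hlev ▸ hpos.1 _ (.inl rfl)
    refine omega false Γ A h h1 (by omega) hA hlev fun Δ hclΔ hposΔ hprev => ?_
    exact ih Δ hclΔ hposΔ (hR _ hprev) hc (closedSeq_union.2 ⟨hclΔ, hcl.2⟩)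
      (positive_union.2 ⟨hposΔ.mono hk, hpos.2⟩)
  | omegaT c Γ A h h1 hk hA hlev _ _ ih₁ ih =>
    have hlevA := Form.lev_prime_compl_mu A
    have d₁ : OmDerAux (prevProv n) n false (insert (Form.mu A).prime Γ) :=
      ih₁ hc (closedSeq_insert.2 ⟨(trivial : (Form.mu A).prime.ClosedF), hcl⟩)
        (positive_insert.2 ⟨PosF.prime_mu (by omega), hpos⟩)
    rcases hk.lt_or_eq with hk | rfl
    · refine omegaT false Γ A h h1 (by omega) hA hlev d₁ fun Δ hclΔ hposΔ hprev => ?_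
      exact ih Δ hclΔ hposΔ (hR _ hprev) hc (closedSeq_union.2 ⟨hclΔ, hcl⟩)
        (positive_union.2 ⟨hposΔ.mono hk.le, hpos⟩)
    · -- at the top level `h = n + 1` the premise `d₁` is itself the proviso, with `Δ = Γ`
      have := ih Γ hcl hpos (by rw [prevProv_succ]; exact d₁) hc (by simpa using hcl)
        (by simpa using hpos)
      rwa [Finset.union_self] at this

end OmDerAux

theorem prevProv_succ_of_prevProv : ∀ n S, prevProv n S → prevProv (n + 1) S
  | 0, _, hS => hS.elim
  | n + 1, S, hS => by
    rw [prevProv_succ] at hS ⊢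
    refine hS.mono n.le_succ (fun A Δ hA hcl hpos hprev => ?_) subset_rfl
    cases n with
    | zero => exact absurd hA (Nat.not_lt_zero _)
    | succ m =>
      rw [prevProv_succ] at hprev ⊢
      exact hprev.stage_pred (prevProv_succ_of_prevProv m)
        (closedSeq_insert.2 ⟨(trivial : (Form.mu A).prime.ClosedF), hcl⟩)
        (positive_insert.2 ⟨PosF.prime_mu hA, hpos⟩)

theorem OmDerAux.of_prevProv {m : ℕ} {S Θ : Sequent} (hS : prevProv m S) (hΘ : S ⊆ Θ) :
    OmDerAux (prevProv m) m false Θ := by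
  have := prevProv_succ_of_prevProv m S hS
  rw [prevProv_succ] at this
  exact this.weaken hΘ

namespace OmDerAux

variable {m : ℕ}

theorem of_mem_subst_compl {B C : Form}
    (hBC : ∀ Θ, B.prime ∈ Θ → C.prime ∈ Θ → OmDerAux (prevProv m) m false Θ) (A : Form)
    (hA : A.IsL0) (hlev : A.lev ≤ m) (Θ : Sequent) (h₁ : (A.subst B).prime ∈ Θ)
    (h₂ : (A.compl.subst C).prime ∈ Θ) : OmDerAux (prevProv m) m false Θ := by
  induction A generalizing Θ <;> simp only [Form.subst, Form.compl, Form.prime] at h₁ h₂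
  case atom i => exact ax_of_mem false h₁ h₂
  case natom i => exact ax_of_mem false h₂ h₁
  case var => exact hBC Θ h₁ h₂
  case and A₁ A₂ ih₁ ih₂ =>
    simp only [Form.IsL0, Form.lev, max_le_iff] at hA hlev
    refine orR_of_mem h₂
      (andR_of_mem (Finset.mem_insert_of_mem (Finset.mem_insert_of_mem h₁)) ?_ ?_)
    · exact ih₁ hA.1 hlev.1 _ (by simp) (by simp)
    · exact ih₂ hA.2 hlev.2 _ (by simp) (by simp)
  case or A₁ A₂ ih₁ ih₂ =>
    simp only [Form.IsL0, Form.lev, max_le_iff] at hA hlev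
    refine orR_of_mem h₁
      (andR_of_mem (Finset.mem_insert_of_mem (Finset.mem_insert_of_mem h₂)) ?_ ?_)
    · exact ih₁ hA.1 hlev.1 _ (by simp) (by simp)
    · exact ih₂ hA.2 hlev.2 _ (by simp) (by simp)
  case box A₁ ih =>
    refine boxR_of_mem h₁ (Γ := {(A₁.compl.subst C).prime}) (by simpa using h₂) ?_
    exact ih hA hlev _ (by simp) (by simp)
  case dia A₁ ih =>
    refine boxR_of_mem h₂ (Γ := {(A₁.subst B).prime}) (by simpa using h₁) ?_
    exact ih hA hlev _ (by simp) (by simp)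
  case mu A₁ _ =>
    have hlev₁ : A₁.lev + 1 ≤ m := hlev
    exact omega_of_mem false A₁ (A₁.lev + 1) (by omega) hlev₁ hA (Form.lev_prime_compl_mu A₁) h₂
      fun Δ _ _ hprev => of_prevProv hprev (Finset.insert_subset (Finset.mem_union_right _ h₁)
        Finset.subset_union_left)
  case nu A₁ _ =>
    have hlev₁ : A₁.lev + 1 ≤ m := hlev
    have hnu : (Form.nu A₁).prime = (Form.mu A₁.compl).compl.prime := by
      simp [Form.compl, Form.prime, Form.compl_compl (A := A₁) hA]
    exact omega_of_mem false A₁.compl (A₁.lev + 1) (by omega) hlev₁ hA.compl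
      (by simpa using Form.lev_prime_compl_mu A₁.compl) (hnu ▸ h₁)
      fun Δ _ _ hprev => of_prevProv hprev (Finset.insert_subset (Finset.mem_union_right _ h₂)
        Finset.subset_union_left)
  case nut => exact hA.elim

theorem of_mem_mu_iter_compl {B : Form} (hB : B.IsL0) (hlev : B.lev ≤ m) (i : ℕ) (Θ : Sequent)
    (h₁ : (Form.mu B).prime ∈ Θ) (h₂ : (B.compl.iter i).prime ∈ Θ) :
    OmDerAux (prevProv m) m false Θ := by
  induction i generalizing Θ with
  | zero =>
    exact orR_of_mem h₂ (ax_of_mem false (i := 0) (by simp [Form.prime]) (by simp [Form.prime]))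
  | succ i ih =>
    refine clo_of_mem h₁ (of_mem_subst_compl ih B hB hlev _ ?_ (Finset.mem_insert_of_mem h₂))
    rw [Form.prime_subst]
    exact Finset.mem_insert_self _ _

end OmDerAux

theorem prevProv_mu_iter_compl {k : ℕ} {B : Form} (hB : B.IsL0) (hlev : B.lev < k) (i : ℕ) :
    prevProv k {(Form.mu B).prime, (B.compl.iter i).prime} := by
  obtain ⟨m, rfl⟩ : ∃ m, k = m + 1 := ⟨k - 1, by omega⟩
  rw [prevProv_succ]
  exact OmDerAux.of_mem_mu_iter_compl hB (by omega) i _ (by simp) (by simp)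

namespace Form

def IsUnpriming (k : ℕ) (F G : Form) : Prop :=
  G = F ∨ G.IsL0 ∧ G.lev ≤ k ∧ G.prime = F

namespace IsUnpriming

variable {k i : ℕ} {A B F G : Form}

theorem refl (k : ℕ) (F : Form) : F.IsUnpriming k F := .inl rfl

theorem of_prime (hG : G.IsL0) (hk : G.lev ≤ k) : G.prime.IsUnpriming k G := .inr ⟨hG, hk, rfl⟩

theorem atom_inv : (atom i).IsUnpriming k G → G = atom i := by
  rintro (rfl | ⟨-, -, h⟩)
  · rfl
  · cases G <;> simp_all [prime]

theorem natom_inv : (natom i).IsUnpriming k G → G = natom i := by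
  rintro (rfl | ⟨-, -, h⟩)
  · rfl
  · cases G <;> simp_all [prime]

theorem nu_inv : (nu F).IsUnpriming k G → G = nu F := by
  rintro (rfl | ⟨-, -, h⟩)
  · rfl
  · cases G <;> simp_all [prime]

theorem or_inv : (or A B).IsUnpriming k G →
    ∃ A' B', G = or A' B' ∧ A.IsUnpriming k A' ∧ B.IsUnpriming k B' := by
  rintro (rfl | ⟨hG, hk, h⟩)
  · exact ⟨A, B, rfl, refl k A, refl k B⟩
  · cases G <;> simp only [prime, reduceCtorEq, or.injEq] at h
    obtain ⟨rfl, rfl⟩ := h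
    simp only [IsL0, lev, max_le_iff] at hG hk
    exact ⟨_, _, rfl, of_prime hG.1 hk.1, of_prime hG.2 hk.2⟩

theorem and_inv : (and A B).IsUnpriming k G →
    ∃ A' B', G = and A' B' ∧ A.IsUnpriming k A' ∧ B.IsUnpriming k B' := by
  rintro (rfl | ⟨hG, hk, h⟩)
  · exact ⟨A, B, rfl, refl k A, refl k B⟩
  · cases G <;> simp only [prime, reduceCtorEq, and.injEq] at h
    obtain ⟨rfl, rfl⟩ := h
    simp only [IsL0, lev, max_le_iff] at hG hk
    exact ⟨_, _, rfl, of_prime hG.1 hk.1, of_prime hG.2 hk.2⟩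

theorem box_inv : (box A).IsUnpriming k G → ∃ A', G = box A' ∧ A.IsUnpriming k A' := by
  rintro (rfl | ⟨hG, hk, h⟩)
  · exact ⟨A, rfl, refl k A⟩
  · cases G <;> simp only [prime, reduceCtorEq, box.injEq] at h
    subst h
    exact ⟨_, rfl, of_prime hG hk⟩

theorem dia_inv : (dia A).IsUnpriming k G → ∃ A', G = dia A' ∧ A.IsUnpriming k A' := by
  rintro (rfl | ⟨hG, hk, h⟩)
  · exact ⟨A, rfl, refl k A⟩
  · cases G <;> simp only [prime, reduceCtorEq, dia.injEq] at h
    subst h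
    exact ⟨_, rfl, of_prime hG hk⟩

theorem mu_inv : (mu F).IsUnpriming k G →
    ∃ F', G = mu F' ∧ (F.subst (mu F)).IsUnpriming k (F'.subst (mu F')) := by
  rintro (rfl | ⟨hG, hk, h⟩)
  · exact ⟨F, rfl, refl k _⟩
  · cases G <;> simp only [prime, reduceCtorEq, mu.injEq] at h
    subst h
    refine ⟨_, rfl, .inr ⟨IsL0.subst hG hG, (lev_subst_le _ _).trans ?_, ?_⟩⟩
    · simp only [lev] at hk ⊢
      omega
    · simp [prime_subst, prime]

theorem compl_mu_inv (hA : A.IsL0) :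
    (mu A).compl.prime.IsUnpriming k G → G = (mu A).compl.prime ∨ G = nu A.compl := by
  rintro (rfl | ⟨hG, -, h⟩)
  · exact .inl rfl
  · cases G <;> simp only [compl, prime, IsL0, reduceCtorEq, nut.injEq] at h hG
    exact .inr (congrArg nu (prime_inj hG hA.compl h))

end IsUnpriming

end Form

def IsUnprimingSeq (k : ℕ) (Θ Θ' : Sequent) : Prop :=
  ∀ F ∈ Θ, ∃ G ∈ Θ', F.IsUnpriming k G

namespace IsUnprimingSeq

variable {k : ℕ} {Γ Γ' Θ' : Sequent}

theorem refl (k : ℕ) (Θ : Sequent) : IsUnprimingSeq k Θ Θ :=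
  fun F hF => ⟨F, hF, .refl k F⟩

theorem of_insert {F : Form} (h : IsUnprimingSeq k (insert F Γ) Θ') :
    (∃ G ∈ Θ', F.IsUnpriming k G) ∧ IsUnprimingSeq k Γ Θ' :=
  Finset.forall_mem_insert _ _ _ |>.1 h

theorem insert {F G : Form} (hFG : F.IsUnpriming k G) (h : IsUnprimingSeq k Γ Γ') :
    IsUnprimingSeq k (insert F Γ) (insert G Γ') := by
  intro F' hF'
  rcases Finset.mem_insert.1 hF' with rfl | hF'
  · exact ⟨G, Finset.mem_insert_self _ _, hFG⟩
  · obtain ⟨G', hG', h'⟩ := h F' hF'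
    exact ⟨G', Finset.mem_insert_of_mem hG', h'⟩

theorem union_left (Δ : Sequent) (h : IsUnprimingSeq k Γ Γ') :
    IsUnprimingSeq k (Δ ∪ Γ) (Δ ∪ Γ') := by
  intro F hF
  rcases Finset.mem_union.1 hF with hF | hF
  · exact ⟨F, Finset.mem_union_left _ hF, .refl k F⟩
  · obtain ⟨G, hG, h'⟩ := h F hF
    exact ⟨G, Finset.mem_union_right _ hG, h'⟩

end IsUnprimingSeq

theorem omega_proviso_iter_compl {k h : ℕ} {A : Form} (hA : A.IsL0) (hAh : A.lev < h)
    (hk : h ≤ k) (i : ℕ) :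
    ClosedSeq {(A.compl.iter i).prime} ∧ Positive h {(A.compl.iter i).prime} ∧
      prevProv k (insert (Form.mu A).prime {(A.compl.iter i).prime}) := by
  have hiter : (A.compl.iter i).prime.lev < h := by
    simpa using (Form.lev_iter_le A.compl i).trans_lt (by simpa using hAh)
  refine ⟨?_, ?_, prevProv_mu_iter_compl hA (hAh.trans_le hk) i⟩
  · simpa [ClosedSeq] using (Form.closedF_iter A.compl i).prime
  · intro C hC
    rw [Finset.mem_singleton.1 hC]
    exact PosF.of_lev_lt hiter

theorem OmDerAux.unprime {k : ℕ} {c : Bool} {Θ : Sequent} (d : OmDerAux (prevProv k) k c Θ)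
    {Θ' : Sequent} (hΘ : IsUnprimingSeq k Θ Θ') : OmDerAux (prevProv k) k c Θ' := by
  induction d generalizing Θ' with
  | ax c Γ i =>
    obtain ⟨⟨G, hG, hat⟩, hΓ⟩ := hΘ.of_insert
    obtain ⟨⟨G', hG', hnat⟩, -⟩ := hΓ.of_insert
    rw [hat.atom_inv] at hG
    rw [hnat.natom_inv] at hG'
    exact ax_of_mem c hG hG'
  | orR c Γ A B _ ih =>
    obtain ⟨⟨G, hG, hAB⟩, hΓ⟩ := hΘ.of_insert
    obtain ⟨A', B', rfl, hA, hB⟩ := hAB.or_inv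
    exact orR_of_mem hG (ih ((hΓ.insert hB).insert hA))
  | andR c Γ A B _ _ ihA ihB =>
    obtain ⟨⟨G, hG, hAB⟩, hΓ⟩ := hΘ.of_insert
    obtain ⟨A', B', rfl, hA, hB⟩ := hAB.and_inv
    exact andR_of_mem hG (ihA (hΓ.insert hA)) (ihB (hΓ.insert hB))
  | boxR c Γ S A _ ih =>
    obtain ⟨G, hG, hbox⟩ := hΘ (Form.box A) (by simp)
    obtain ⟨A', rfl, hA⟩ := hbox.box_inv
    let Γ' := Θ'.preimage Form.dia fun _ _ _ _ h => Form.dia.inj h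
    have hΓ : IsUnprimingSeq k Γ Γ' := fun C hC => by
      obtain ⟨G, hG, hdia⟩ := hΘ (Form.dia C) (by simp [hC])
      obtain ⟨C', rfl, hC'⟩ := hdia.dia_inv
      exact ⟨C', Finset.mem_preimage.2 hG, hC'⟩
    exact boxR_of_mem hG (Finset.image_subset_iff.2 fun _ h => Finset.mem_preimage.1 h)
      (ih (hΓ.insert hA))
  | clo c Γ F _ ih =>
    obtain ⟨⟨G, hG, hmu⟩, hΓ⟩ := hΘ.of_insert
    obtain ⟨F', rfl, hF⟩ := hmu.mu_inv
    exact clo_of_mem hG (ih (hΓ.insert hF))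
  | nuR c Γ F _ ih =>
    obtain ⟨⟨G, hG, hnu⟩, hΓ⟩ := hΘ.of_insert
    rw [hnu.nu_inv] at hG
    exact nuR_of_mem hG fun i => ih i (hΓ.insert (.refl k _))
  | cut Γ A hA hAc hlev _ _ ih₁ ih₂ =>
    exact cut Θ' A hA hAc hlev (ih₁ (hΘ.insert (.refl k _))) (ih₂ (hΘ.insert (.refl k _)))
  | omega c Γ A h h1 hk hA hlev _ ih =>
    obtain ⟨⟨G, hG, hFG⟩, hΓ⟩ := hΘ.of_insert
    rcases hFG.compl_mu_inv hA with rfl | rfl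
    · exact omega_of_mem c A h h1 hk hA hlev hG fun Δ hcl hpos hprev =>
        ih Δ hcl hpos hprev (hΓ.union_left Δ)
    -- `ν̃X.(¬A)'` was unprimed to `νX.¬A`: its `ω`-premises are `Ω`-premises with `Δ` a singleton
    · have hAh : A.lev < h := by rw [← hlev, Form.lev_prime_compl_mu]; omega
      refine nuR_of_mem hG fun i => ?_
      obtain ⟨hcl, hpos, hprev⟩ := omega_proviso_iter_compl hA hAh hk i
      refine ih _ hcl hpos hprev ?_
      rw [← Finset.insert_eq]
      have hiter : (A.compl.iter i).lev ≤ k :=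
        (Form.lev_iter_le _ i).trans (by rw [Form.lev_compl]; omega)
      exact hΓ.insert (.of_prime (hA.compl.iter i) hiter)
  | omegaT c Γ A h h1 hk hA hlev _ _ ih₁ ih =>
    exact omegaT c Θ' A h h1 hk hA hlev (ih₁ (hΘ.insert (.refl k _)))
      fun Δ hcl hpos hprev => ih Δ hcl hpos hprev (hΘ.union_left Δ)

theorem stmt2_general (h k : ℕ) (hhk : h ≤ k) (A : Form)
    (hA : A.IsL0) (hlev : A.lev = h)
    (Γ : Sequent)
    (hd : OmProv k false (insert A.prime Γ)) :
    OmProv k false (insert A Γ) := by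
  rw [omProv_eq] at hd ⊢
  exact hd.unprime ((IsUnprimingSeq.refl k Γ).insert (.of_prime hA (hlev ▸ hhk)))

/-- for `h ≤ k`, if `A` is a formula of `L0` with `lev(A) = h` and
`Γ, Aʹ` is cut-free derivable in `M^Ω_k`, then so is `Γ, A`. -/
theorem stmt2 (h k : ℕ) (hhk : h ≤ k) (A : Form)
    (hA : A.IsL0) (hAc : A.ClosedF) (hlev : A.lev = h)
    (Γ : Sequent) (hΓ : ClosedSeq Γ)
    (hd : OmProv k false (insert A.prime Γ)) :
    OmProv k false (insert A Γ) :=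
  stmt2_general h k hhk A hA hlev Γ hd

end OneVarMu
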